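/- Let n ≥ 1 and u₀, u₁ ∈ L¹(ℝⁿ). Then there exist constants C₁, C₂ > 0 depending only on n and T ≥ 1 such that for all t ≥ T: C₁·|P₀+P₁|²·t^{-n/2} ≤ ∫_{ℝⁿ} |φ₁(t,ξ)|² dξ ≤ C₂·(‖u₀‖₁² + ‖u₁‖₁²)·t^{-n/2}. -/

import Mathlib

open MeasureTheory Real

noncomputable section

def mlog {n : ℕ} (ξ : EuclideanSpace ℝ (Fin n)) : ℝ := Real.log (1 + ‖ξ‖ ^ 2)

def rho {n : ℕ} (ξ : EuclideanSpace ℝ (Fin n)) : ℝ :=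
  min (min ((1/2) * mlog ξ * (1 + mlog ξ)) (1 / (2 * (1 + mlog ξ))))
    ((1/2) * Real.sqrt (mlog ξ))

def ft {n : ℕ} (f : EuclideanSpace ℝ (Fin n) → ℂ) (ξ : EuclideanSpace ℝ (Fin n)) : ℂ :=
  ∫ x, Complex.exp (-Complex.I * ((inner ℝ x ξ : ℝ) : ℂ)) * f x

def normL1 {n : ℕ} (f : EuclideanSpace ℝ (Fin n) → ℂ) : ℝ := ∫ x, ‖f x‖

def norm11 {n : ℕ} (f : EuclideanSpace ℝ (Fin n) → ℂ) : ℝ :=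
  ∫ x, (1 + ‖x‖) * ‖f x‖

def MemL11 {n : ℕ} (f : EuclideanSpace ℝ (Fin n) → ℂ) : Prop :=
  Integrable f ∧ Integrable (fun x => (1 + ‖x‖) * ‖f x‖)

def Ysq {n : ℕ} (f : EuclideanSpace ℝ (Fin n) → ℂ) (δ : ℝ) : ℝ :=
  ∫ ξ, (1 + mlog ξ) ^ δ * ‖ft f ξ‖ ^ 2

def MemY {n : ℕ} (f : EuclideanSpace ℝ (Fin n) → ℂ) (δ : ℝ) : Prop :=
  Integrable (fun ξ => (1 + mlog ξ) ^ δ * ‖ft f ξ‖ ^ 2)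

def IsFourierSol {n : ℕ} (u₀ u₁ : EuclideanSpace ℝ (Fin n) → ℂ)
    (v : ℝ → EuclideanSpace ℝ (Fin n) → ℂ) : Prop :=
  Measurable (Function.uncurry v) ∧
  ∀ ξ, ContDiff ℝ 2 (fun t => v t ξ) ∧
    (∀ t > (0:ℝ), ((1 + mlog ξ : ℝ) : ℂ) * deriv (deriv (fun s => v s ξ)) t
        + ((mlog ξ * (1 + mlog ξ) : ℝ) : ℂ) * v t ξ + deriv (fun s => v s ξ) t = 0) ∧
    v 0 ξ = ft u₀ ξ ∧ deriv (fun s => v s ξ) 0 = ft u₁ ξ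

def PP {n : ℕ} (u₀ u₁ : EuclideanSpace ℝ (Fin n) → ℂ) : ℂ := (∫ x, u₀ x) + ∫ x, u₁ x

def prof1 {n : ℕ} (u₀ u₁ : EuclideanSpace ℝ (Fin n) → ℂ) (t : ℝ)
    (ξ : EuclideanSpace ℝ (Fin n)) : ℂ :=
  PP u₀ u₁ * ((Real.exp (-(t * (mlog ξ * (1 + mlog ξ)))) : ℝ) : ℂ)

def prof2 {n : ℕ} (u₀ u₁ : EuclideanSpace ℝ (Fin n) → ℂ) (t : ℝ)
    (ξ : EuclideanSpace ℝ (Fin n)) : ℂ :=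
  ((Real.exp (-(t / (2 * mlog ξ))) : ℝ) : ℂ) *
    (((Real.sin (Real.sqrt (mlog ξ) * t) / Real.sqrt (mlog ξ) : ℝ) : ℂ) * ft u₁ ξ
      + ((Real.cos (Real.sqrt (mlog ξ) * t) : ℝ) : ℂ) * ft u₀ ξ)

def I0 {n : ℕ} (u₀ u₁ : EuclideanSpace ℝ (Fin n) → ℂ) (l : ℝ) : ℝ :=
  Real.sqrt (norm11 u₀ ^ 2 + norm11 u₁ ^ 2 + Ysq u₀ (l + 1) + Ysq u₁ l)

/-!
Since `|φ₁(t, ξ)|² = |P₀ + P₁|² e^{-2t m(1+m)}`, both bounds are statements about the kernel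
`e^{-s m(1+m)}` at `s = 2t`. As `m(ξ) ≤ |ξ|²`, the kernel is at least `e^{-2}` on the ball of
radius `s^{-1/2}`, whose volume is a multiple of `s^{-n/2}`. Conversely `m(1+m) ≥ m` bounds the
kernel by `(1 + |ξ|²)^{-s}`, and Bernoulli's inequality for `(1 + |ξ|²)^{s/n}` bounds this by
`(1 + (s/n)|ξ|²)^{-n}`, which is integrable and, by scaling, has integral
`(n/s)^{n/2} ∫ (1 + |η|²)^{-n} dη`.
-/

open Metric

lemma inv_sqrt_pow_eq_rpow_neg {x : ℝ} (hx : 0 ≤ x) (k : ℕ) :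
    ((√x)⁻¹) ^ k = x ^ (-((k : ℝ) / 2)) := by
  rw [Real.sqrt_eq_rpow, ← Real.rpow_neg hx, ← Real.rpow_natCast, ← Real.rpow_mul hx]
  ring_nf

lemma one_add_rpow_neg_le {x s : ℝ} {k : ℕ} (hx : 0 ≤ x) (hk : 0 < k) (hks : k ≤ s) :
    (1 + x) ^ (-s) ≤ (1 + s / k * x) ^ (-(k : ℝ)) := by
  have hk' : (0 : ℝ) < k := by exact_mod_cast hk
  have hs0 : 0 ≤ s := hk'.le.trans hks
  have hbern : 1 + s / k * x ≤ (1 + x) ^ (s / k) :=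
    one_add_mul_self_le_rpow_one_add (by linarith) ((one_le_div hk').mpr hks)
  have hpow : (1 + x) ^ s = ((1 + x) ^ (s / k)) ^ (k : ℝ) := by
    rw [← Real.rpow_mul (by linarith), div_mul_cancel₀ _ hk'.ne']
  rw [Real.rpow_neg (by linarith), Real.rpow_neg (by positivity), hpow]
  gcongr

section ProfileKernel

variable {n : ℕ}

lemma mlog_nonneg (ξ : EuclideanSpace ℝ (Fin n)) : 0 ≤ mlog ξ :=
  Real.log_nonneg (by nlinarith [sq_nonneg ‖ξ‖])

lemma mlog_le_norm_sq (ξ : EuclideanSpace ℝ (Fin n)) : mlog ξ ≤ ‖ξ‖ ^ 2 := by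
  have := Real.log_le_sub_one_of_pos (show 0 < 1 + ‖ξ‖ ^ 2 by positivity)
  rw [mlog]; linarith

def profileKernel (t : ℝ) (ξ : EuclideanSpace ℝ (Fin n)) : ℝ :=
  Real.exp (-(t * (mlog ξ * (1 + mlog ξ))))

lemma continuous_profileKernel (t : ℝ) :
    Continuous (profileKernel (n := n) t) := by
  have hm : Continuous fun ξ : EuclideanSpace ℝ (Fin n) => mlog ξ :=
    Continuous.log (by fun_prop) fun ξ => by positivity
  unfold profileKernel
  fun_prop

lemma profileKernel_pos (t : ℝ) (ξ : EuclideanSpace ℝ (Fin n)) : 0 < profileKernel t ξ :=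
  Real.exp_pos _

lemma profileKernel_sq (t : ℝ) (ξ : EuclideanSpace ℝ (Fin n)) :
    profileKernel t ξ ^ 2 = profileKernel (2 * t) ξ := by
  rw [profileKernel, profileKernel, ← Real.exp_nat_mul]
  ring_nf

lemma exp_neg_two_le_profileKernel {s : ℝ} (hs : 1 ≤ s) {ξ : EuclideanSpace ℝ (Fin n)}
    (hξ : ξ ∈ ball 0 (√s)⁻¹) : Real.exp (-2) ≤ profileKernel s ξ := by
  have hs0 : 0 < s := by linarith
  have hξs : ‖ξ‖ ^ 2 ≤ s⁻¹ := by
    rw [mem_ball_zero_iff] at hξ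
    calc ‖ξ‖ ^ 2 ≤ ((√s)⁻¹) ^ 2 := by gcongr
      _ = s⁻¹ := by rw [inv_pow, Real.sq_sqrt hs0.le]
  have hm : s * mlog ξ ≤ 1 := by
    calc s * mlog ξ ≤ s * s⁻¹ := by gcongr; exact (mlog_le_norm_sq ξ).trans hξs
      _ = 1 := mul_inv_cancel₀ hs0.ne'
  have hm1 : mlog ξ ≤ 1 := by nlinarith [mlog_nonneg ξ]
  apply Real.exp_le_exp.mpr
  nlinarith [mlog_nonneg ξ]

lemma profileKernel_le {s : ℝ} (hn : 0 < n) (hs : n ≤ s) (ξ : EuclideanSpace ℝ (Fin n)) :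
    profileKernel s ξ ≤ (1 + ‖√(s / n) • ξ‖ ^ 2) ^ (-(n : ℝ)) := by
  have hs0 : 0 ≤ s := le_trans (Nat.cast_nonneg n) hs
  have hexp : profileKernel s ξ ≤ (1 + ‖ξ‖ ^ 2) ^ (-s) := by
    rw [Real.rpow_def_of_pos (by positivity), profileKernel, ← mlog]
    apply Real.exp_le_exp.mpr
    nlinarith [mul_nonneg hs0 (mul_self_nonneg (mlog ξ))]
  have hnorm : ‖√(s / n) • ξ‖ ^ 2 = s / n * ‖ξ‖ ^ 2 := by
    rw [norm_smul, mul_pow, Real.norm_eq_abs, sq_abs, Real.sq_sqrt (by positivity)]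
  rw [hnorm]
  exact hexp.trans (one_add_rpow_neg_le (by positivity) hn hs)

lemma integrable_one_add_norm_sq_rpow_neg (hn : 0 < n) :
    Integrable fun ξ : EuclideanSpace ℝ (Fin n) => (1 + ‖ξ‖ ^ 2) ^ (-(n : ℝ)) := by
  have h : ((Module.finrank ℝ (EuclideanSpace ℝ (Fin n)) : ℕ) : ℝ) < 2 * n := by
    rw [finrank_euclideanSpace_fin]
    have : (0 : ℝ) < n := by exact_mod_cast hn
    linarith
  simpa [neg_div, mul_div_assoc, mul_comm] using integrable_rpow_neg_one_add_norm_sq h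

lemma integrable_profileKernel {s : ℝ} (hn : 0 < n) (hs : n ≤ s) :
    Integrable (profileKernel (n := n) s) := by
  have hs0 : 0 < s := lt_of_lt_of_le (by exact_mod_cast hn) hs
  refine ((integrable_one_add_norm_sq_rpow_neg hn).comp_smul (R := √(s / n)) (by positivity)).mono'
    (continuous_profileKernel s).aestronglyMeasurable (.of_forall fun ξ => ?_)
  rw [Real.norm_of_nonneg (profileKernel_pos s ξ).le]
  exact profileKernel_le hn hs ξ

lemma exists_le_integral_profileKernel (hn : 0 < n) :
    ∃ c > 0, ∀ s ≥ (n : ℝ), c * s ^ (-((n : ℝ) / 2)) ≤ ∫ ξ, profileKernel (n := n) s ξ := by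
  refine ⟨Real.exp (-2) * volume.real (ball (0 : EuclideanSpace ℝ (Fin n)) 1), ?_, ?_⟩
  · exact mul_pos (Real.exp_pos _)
      (ENNReal.toReal_pos (measure_ball_pos _ _ one_pos).ne' measure_ball_lt_top.ne)
  intro s hs
  have hs1 : 1 ≤ s := le_trans (by exact_mod_cast hn) hs
  have hs0 : 0 < s := by linarith
  have hvol : volume.real (ball (0 : EuclideanSpace ℝ (Fin n)) (√s)⁻¹)
      = s ^ (-((n : ℝ) / 2)) * volume.real (ball (0 : EuclideanSpace ℝ (Fin n)) 1) := by
    rw [measureReal_def, Measure.addHaar_ball_of_pos _ _ (by positivity), ENNReal.toReal_mul,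
      ENNReal.toReal_ofReal (by positivity), finrank_euclideanSpace_fin,
      inv_sqrt_pow_eq_rpow_neg hs0.le, measureReal_def]
  calc _ = Real.exp (-2) * volume.real (ball (0 : EuclideanSpace ℝ (Fin n)) (√s)⁻¹) := by
        rw [hvol]; ring
    _ ≤ ∫ ξ in ball 0 (√s)⁻¹, profileKernel s ξ :=
        setIntegral_ge_of_const_le_real measurableSet_ball measure_ball_lt_top.ne
          (fun ξ hξ => exp_neg_two_le_profileKernel hs1 hξ)
          (integrable_profileKernel hn hs).integrableOn
    _ ≤ ∫ ξ, profileKernel s ξ :=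
        setIntegral_le_integral (integrable_profileKernel hn hs)
          (.of_forall fun ξ => (profileKernel_pos s ξ).le)

lemma exists_integral_profileKernel_le (hn : 0 < n) :
    ∃ C > 0, ∀ s ≥ (n : ℝ), ∫ ξ, profileKernel (n := n) s ξ ≤ C * s ^ (-((n : ℝ) / 2)) := by
  set J := ∫ ξ : EuclideanSpace ℝ (Fin n), (1 + ‖ξ‖ ^ 2) ^ (-(n : ℝ))
  have hcont : Continuous fun ξ : EuclideanSpace ℝ (Fin n) => (1 + ‖ξ‖ ^ 2) ^ (-(n : ℝ)) :=
    (continuous_const.add (continuous_norm.pow 2)).rpow_const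
      fun ξ => Or.inl (by positivity : (0 : ℝ) < 1 + ‖ξ‖ ^ 2).ne'
  have hJ : 0 < J := integral_pos_of_integrable_nonneg_nonzero (x := 0) hcont
    (integrable_one_add_norm_sq_rpow_neg hn) (fun ξ => by positivity) (by simp)
  refine ⟨(n : ℝ) ^ ((n : ℝ) / 2) * J, by positivity, fun s hs => ?_⟩
  have hn' : (0 : ℝ) < n := by exact_mod_cast hn
  have hs0 : 0 < s := by linarith
  have hscale : ∫ ξ : EuclideanSpace ℝ (Fin n), (1 + ‖√(s / n) • ξ‖ ^ 2) ^ (-(n : ℝ))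
      = (n : ℝ) ^ ((n : ℝ) / 2) * s ^ (-((n : ℝ) / 2)) * J := by
    rw [Measure.integral_comp_smul (μ := volume) (f := fun ξ => (1 + ‖ξ‖ ^ 2) ^ (-(n : ℝ))),
      finrank_euclideanSpace_fin, smul_eq_mul, ← inv_pow, abs_of_nonneg (by positivity),
      inv_sqrt_pow_eq_rpow_neg (by positivity), Real.div_rpow hs0.le hn'.le, Real.rpow_neg hn'.le,
      div_inv_eq_mul]
    ring
  calc ∫ ξ, profileKernel s ξ
      ≤ ∫ ξ : EuclideanSpace ℝ (Fin n), (1 + ‖√(s / n) • ξ‖ ^ 2) ^ (-(n : ℝ)) :=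
        integral_mono (integrable_profileKernel hn hs)
          ((integrable_one_add_norm_sq_rpow_neg hn).comp_smul (R := √(s / n)) (by positivity))
          (profileKernel_le hn hs)
    _ = (n : ℝ) ^ ((n : ℝ) / 2) * J * s ^ (-((n : ℝ) / 2)) := by rw [hscale]; ring

end ProfileKernel

section Profile

variable {n : ℕ} (u₀ u₁ : EuclideanSpace ℝ (Fin n) → ℂ)

lemma norm_prof1_sq (t : ℝ) (ξ : EuclideanSpace ℝ (Fin n)) :
    ‖prof1 u₀ u₁ t ξ‖ ^ 2 = ‖PP u₀ u₁‖ ^ 2 * profileKernel (2 * t) ξ := by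
  rw [prof1, norm_mul, Complex.norm_real, Real.norm_of_nonneg (Real.exp_pos _).le, mul_pow,
    ← profileKernel, profileKernel_sq]

lemma integral_norm_prof1_sq (t : ℝ) :
    ∫ ξ, ‖prof1 u₀ u₁ t ξ‖ ^ 2
      = ‖PP u₀ u₁‖ ^ 2 * ∫ ξ : EuclideanSpace ℝ (Fin n), profileKernel (2 * t) ξ := by
  simp_rw [norm_prof1_sq]
  exact integral_const_mul _ _

lemma norm_PP_sq_le : ‖PP u₀ u₁‖ ^ 2 ≤ 2 * (normL1 u₀ ^ 2 + normL1 u₁ ^ 2) := by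
  have h : ‖PP u₀ u₁‖ ≤ normL1 u₀ + normL1 u₁ :=
    (norm_add_le _ _).trans (add_le_add (norm_integral_le_integral_norm u₀)
      (norm_integral_le_integral_norm u₁))
  calc ‖PP u₀ u₁‖ ^ 2 ≤ (normL1 u₀ + normL1 u₁) ^ 2 := by gcongr
    _ ≤ 2 * (normL1 u₀ ^ 2 + normL1 u₁ ^ 2) := add_sq_le

end Profile

theorem profile1_L2_two_sided_general (n : ℕ) (hn : 1 ≤ n)
    (u₀ u₁ : EuclideanSpace ℝ (Fin n) → ℂ) :
    ∃ C₁ C₂ T : ℝ, 0 < C₁ ∧ 0 < C₂ ∧ 1 ≤ T ∧ ∀ t ≥ T,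
      C₁ * ‖PP u₀ u₁‖ ^ 2 * t ^ (-((n:ℝ) / 2)) ≤
        (∫ ξ, ‖prof1 u₀ u₁ t ξ‖ ^ 2) ∧
      (∫ ξ, ‖prof1 u₀ u₁ t ξ‖ ^ 2) ≤
        C₂ * (normL1 u₀ ^ 2 + normL1 u₁ ^ 2) * t ^ (-((n:ℝ) / 2)) := by
  obtain ⟨c, hc, hlower⟩ := exists_le_integral_profileKernel hn
  obtain ⟨C, hC, hupper⟩ := exists_integral_profileKernel_le hn
  set κ : ℝ := 2 ^ (-((n : ℝ) / 2))
  refine ⟨c * κ, 2 * C * κ, n, by positivity, by positivity, by exact_mod_cast hn,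
    fun t ht => ?_⟩
  have hn1 : (1 : ℝ) ≤ n := Nat.one_le_cast.mpr hn
  have h2t : (n : ℝ) ≤ 2 * t := by linarith
  have hscale : (2 * t) ^ (-((n : ℝ) / 2)) = κ * t ^ (-((n : ℝ) / 2)) :=
    Real.mul_rpow zero_le_two (by linarith)
  rw [integral_norm_prof1_sq]
  constructor
  · calc c * κ * ‖PP u₀ u₁‖ ^ 2 * t ^ (-((n : ℝ) / 2))
        = ‖PP u₀ u₁‖ ^ 2 * (c * (2 * t) ^ (-((n : ℝ) / 2))) := by rw [hscale]; ring
      _ ≤ _ := by gcongr; exact hlower _ h2t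
  · calc ‖PP u₀ u₁‖ ^ 2 * ∫ ξ, profileKernel (2 * t) ξ
        ≤ 2 * (normL1 u₀ ^ 2 + normL1 u₁ ^ 2) * (C * (2 * t) ^ (-((n : ℝ) / 2))) := by
          gcongr
          · exact integral_nonneg fun ξ => (profileKernel_pos _ ξ).le
          · exact norm_PP_sq_le u₀ u₁
          · exact hupper _ h2t
      _ = _ := by rw [hscale]; ring

theorem profile1_L2_two_sided (n : ℕ) (hn : 1 ≤ n)
    (u₀ u₁ : EuclideanSpace ℝ (Fin n) → ℂ)
    (h0L1 : Integrable u₀) (h1L1 : Integrable u₁) :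
    ∃ C₁ C₂ T : ℝ, 0 < C₁ ∧ 0 < C₂ ∧ 1 ≤ T ∧ ∀ t ≥ T,
      C₁ * ‖PP u₀ u₁‖ ^ 2 * t ^ (-((n:ℝ) / 2)) ≤
        (∫ ξ, ‖prof1 u₀ u₁ t ξ‖ ^ 2) ∧
      (∫ ξ, ‖prof1 u₀ u₁ t ξ‖ ^ 2) ≤
        C₂ * (normL1 u₀ ^ 2 + normL1 u₁ ^ 2) * t ^ (-((n:ℝ) / 2)) :=
  profile1_L2_two_sided_general n hn u₀ u₁
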